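/- Let D = conv{±e₁, ±e₂, ±e₃} ⊆ ℝ³ be the standard octahedron, and let Λ = {x ∈ ℤ³ : x₁ + x₂ + x₃ is even} be the sublattice of ℤ³ generated by the pairwise differences of the vertices of D. If Λ' is a full-rank lattice in ℝ³ containing Λ such that for any two distinct vectors s, t ∈ Λ' the interiors of D + s and D + t are disjoint, then Λ' = Λ. -/

import Mathlib

open Pointwise MeasureTheory

/-- The standard basis vector `eᵢ` of `ℝ³`. -/
noncomputable def stdVec (i : Fin 3) : EuclideanSpace ℝ (Fin 3) :=
  EuclideanSpace.single i (1 : ℝ)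

/-- The standard octahedron `conv {±e₁, ±e₂, ±e₃} ⊆ ℝ³`. -/
noncomputable def stdOctahedron : Set (EuclideanSpace ℝ (Fin 3)) :=
  convexHull ℝ {stdVec 0, -stdVec 0, stdVec 1, -stdVec 1, stdVec 2, -stdVec 2}

/-! Two translates of the octahedron by `s ≠ t` can only have disjoint interiors if
`‖t - s‖₁ ≥ 2`, since otherwise their midpoint lies in both. On the other hand every point of
`ℝ³` lies at `ℓ¹`-distance at most `3/2` from `Λ`: of the eight corners of its unit integer
cube, the four of the right parity have total distance `6` to it. Hence every `v ∈ Λ'` is at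
distance `< 2` from some point of `Λ ⊆ Λ'`, and so equals it. -/

def l1Norm (x : EuclideanSpace ℝ (Fin 3)) : ℝ := |x 0| + |x 1| + |x 2|

theorem continuous_l1Norm : Continuous l1Norm := by
  unfold l1Norm; fun_prop

theorem setOf_l1Norm_le_one_subset_stdOctahedron :
    {x | l1Norm x ≤ 1} ⊆ stdOctahedron := by
  intro x hx
  -- the slack `r` is spread evenly over the six vertices, whose contributions cancel
  set r := 1 - l1Norm x
  let w : Fin 3 × Bool → ℝ := fun p => (if p.2 then (x p.1)⁺ else (x p.1)⁻) + r / 6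
  let z : Fin 3 × Bool → EuclideanSpace ℝ (Fin 3) := fun p =>
    if p.2 then stdVec p.1 else -stdVec p.1
  have hz : ∀ p, z p ∈ stdOctahedron := by
    rintro ⟨i, _ | _⟩ <;> apply subset_convexHull <;> fin_cases i <;> simp [z]
  have hw : ∀ p, 0 ≤ w p := by
    have : 0 ≤ r := sub_nonneg.2 hx
    rintro ⟨i, _ | _⟩ <;> simp only [w] <;> positivity
  have hsum : ∑ p, w p = 1 := by
    simp only [w, r, l1Norm, Fintype.sum_prod_type, Fintype.sum_bool, Fin.sum_univ_three,
      if_true, Bool.false_eq_true, if_false, ← posPart_add_negPart]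
    ring
  have hcomb : ∑ p, w p • z p = x := by
    ext j
    simp only [w, z, Fintype.sum_prod_type, Fintype.sum_bool, Fin.sum_univ_three]
    fin_cases j <;> simp [stdVec, ← sub_eq_add_neg]
  rw [← hcomb]
  exact (convex_convexHull ℝ _).sum_mem (fun p _ => hw p) hsum (fun p _ => hz p)

theorem mem_interior_vadd_stdOctahedron {s x : EuclideanSpace ℝ (Fin 3)}
    (h : l1Norm (x - s) < 1) : x ∈ interior (s +ᵥ stdOctahedron) := by
  rw [interior_vadd, Set.mem_vadd_set_iff_neg_vadd_mem, vadd_eq_add, neg_add_eq_sub]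
  exact interior_maximal (fun y (hy : l1Norm y < 1) => setOf_l1Norm_le_one_subset_stdOctahedron hy.le)
    (isOpen_lt continuous_l1Norm continuous_const) h

theorem l1Norm_sub_comm (s t : EuclideanSpace ℝ (Fin 3)) : l1Norm (s - t) = l1Norm (t - s) := by
  simp only [l1Norm, PiLp.sub_apply, abs_sub_comm]

theorem l1Norm_midpoint_sub (s t : EuclideanSpace ℝ (Fin 3)) :
    l1Norm ((2⁻¹ : ℝ) • (s + t) - s) = l1Norm (t - s) / 2 := by
  have key : ∀ a b : ℝ, |2⁻¹ * (a + b) - a| = |b - a| / 2 := fun a b => by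
    rw [show 2⁻¹ * (a + b) - a = (b - a) / 2 by ring, abs_div, abs_two]
  simp only [l1Norm, PiLp.sub_apply, PiLp.smul_apply, PiLp.add_apply, smul_eq_mul, key]
  ring

theorem two_le_l1Norm_sub_of_disjoint_interior {s t : EuclideanSpace ℝ (Fin 3)}
    (h : Disjoint (interior (s +ᵥ stdOctahedron)) (interior (t +ᵥ stdOctahedron))) :
    2 ≤ l1Norm (t - s) := by
  by_contra! hlt
  have hs : (2⁻¹ : ℝ) • (s + t) ∈ interior (s +ᵥ stdOctahedron) :=
    mem_interior_vadd_stdOctahedron (by rw [l1Norm_midpoint_sub]; linarith)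
  have ht : (2⁻¹ : ℝ) • (s + t) ∈ interior (t +ᵥ stdOctahedron) := by
    refine mem_interior_vadd_stdOctahedron ?_
    rw [add_comm, l1Norm_midpoint_sub, l1Norm_sub_comm]
    linarith
  exact Set.disjoint_left.1 h hs ht

theorem exists_even_l1Norm_sub_lt_two (v : EuclideanSpace ℝ (Fin 3)) :
    ∃ y : Fin 3 → ℤ, Even (y 0 + y 1 + y 2) ∧
      l1Norm (v - WithLp.toLp 2 fun i => (y i : ℝ)) < 2 := by
  obtain ⟨m, hm⟩ : ∃ m : Fin 3 → ℤ, ∀ i, (m i : ℝ) ≤ v i ∧ v i < m i + 1 :=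
    ⟨fun i => ⌊v i⌋, fun i => ⟨Int.floor_le _, Int.lt_floor_add_one _⟩⟩
  have near (i : Fin 3) : |v i - m i| = v i - m i := abs_of_nonneg (sub_nonneg.2 (hm i).1)
  have far (i : Fin 3) : |v i - (m i + 1)| = m i + 1 - v i := by
    rw [abs_sub_comm, abs_of_nonneg (sub_nonneg.2 (hm i).2.le)]
  -- The four candidates `m + c`, `c ∈ {0,1}³`, of the right parity have total distance 6 to `v`.
  by_contra! H
  have H' (a b c : ℤ) (hev : Even (m 0 + a + (m 1 + b) + (m 2 + c))) :
      2 ≤ |v 0 - (m 0 + a : ℤ)| + |v 1 - (m 1 + b : ℤ)| + |v 2 - (m 2 + c : ℤ)| :=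
    H ![m 0 + a, m 1 + b, m 2 + c] hev
  rcases Int.even_or_odd (m 0 + m 1 + m 2) with hpar | hpar <;>
    simp only [Int.even_iff, Int.odd_iff] at hpar
  · have h₁ := H' 0 0 0 (by rw [Int.even_iff]; omega)
    have h₂ := H' 1 1 0 (by rw [Int.even_iff]; omega)
    have h₃ := H' 1 0 1 (by rw [Int.even_iff]; omega)
    have h₄ := H' 0 1 1 (by rw [Int.even_iff]; omega)
    push_cast at h₁ h₂ h₃ h₄
    simp only [add_zero, near, far] at h₁ h₂ h₃ h₄
    linarith
  · have h₁ := H' 1 0 0 (by rw [Int.even_iff]; omega)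
    have h₂ := H' 0 1 0 (by rw [Int.even_iff]; omega)
    have h₃ := H' 0 0 1 (by rw [Int.even_iff]; omega)
    have h₄ := H' 1 1 1 (by rw [Int.even_iff]; omega)
    push_cast at h₁ h₂ h₃ h₄
    simp only [add_zero, near, far] at h₁ h₂ h₃ h₄
    linarith

theorem stmt_15_general (Λ Λ' : Submodule ℤ (EuclideanSpace ℝ (Fin 3)))
    (hΛ : (Λ : Set (EuclideanSpace ℝ (Fin 3))) =
      {x | ∃ y : Fin 3 → ℤ, (∀ i, x i = (y i : ℝ)) ∧ Even (y 0 + y 1 + y 2)})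
    (hle : Λ ≤ Λ')
    (h : ∀ s ∈ Λ', ∀ t ∈ Λ', s ≠ t →
      Disjoint (interior (s +ᵥ stdOctahedron)) (interior (t +ᵥ stdOctahedron))) :
    Λ' = Λ := by
  refine le_antisymm (fun v hv => ?_) hle
  obtain ⟨y, hy, hdist⟩ := exists_even_l1Norm_sub_lt_two v
  have hyΛ : (WithLp.toLp 2 fun i => (y i : ℝ)) ∈ Λ := by
    rw [← SetLike.mem_coe, hΛ]
    exact ⟨y, fun _ => rfl, hy⟩
  by_contra hvΛ
  have hne : v ≠ WithLp.toLp 2 fun i => (y i : ℝ) := fun hvy => hvΛ (hvy ▸ hyΛ)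
  exact (two_le_l1Norm_sub_of_disjoint_interior (h _ (hle hyΛ) v hv hne.symm)).not_gt hdist

/-- Let `Λ = {x ∈ ℤ³ : x₁ + x₂ + x₃ even}`. If `Λ'` is a full-rank lattice in `ℝ³`
containing `Λ` such that the translates of the standard octahedron `D` by the vectors of
`Λ'` have pairwise disjoint interiors, then `Λ' = Λ`. -/
theorem stmt_15 (Λ Λ' : Submodule ℤ (EuclideanSpace ℝ (Fin 3)))
    (hΛ : (Λ : Set (EuclideanSpace ℝ (Fin 3))) =
      {x | ∃ y : Fin 3 → ℤ, (∀ i, x i = (y i : ℝ)) ∧ Even (y 0 + y 1 + y 2)})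
    [DiscreteTopology Λ'] [IsZLattice ℝ Λ']
    (hle : Λ ≤ Λ')
    (h : ∀ s ∈ Λ', ∀ t ∈ Λ', s ≠ t →
      Disjoint (interior (s +ᵥ stdOctahedron)) (interior (t +ᵥ stdOctahedron))) :
    Λ' = Λ :=
  stmt_15_general Λ Λ' hΛ hle h
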